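/- If H is a Hopf algebra possessing a right integral t with ε(t)=1, then the Hopf algebra homology of H with coefficients in any left H-module M vanishes in positive degrees: the operator h(h_1⊗⋯⊗h_n⊗m) = t⊗h_1⊗⋯⊗h_n⊗m on the chain complex C_n(H,M) = H^{⊗n}⊗M satisfies δh + hδ = id, where δ(g_1,…,g_p,m) = ε(g_1)(g_2,…,g_p,m) + Σ_{i=1}^{p-1} (−1)^i (g_1,…,g_i g_{i+1},…,g_p,m) + (−1)^p (g_1,…,g_{p-1}, g_p·m). -/

import Mathlib

open TensorProduct

noncomputable section

variable {k : Type} [Field k] {H : Type} [Ring H] [HopfAlgebra k H]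
  {A : Type} [Ring A] [Algebra k A]

/-- The Sweedler compatibility `h·(a*b) = Σ (h⁽⁰⁾·a)(h⁽¹⁾·b)` expressed as an equality of
linear maps `H ⊗ (A ⊗ A) → A`, for a given multiplication `m` on `A` and comultiplication
`δ` on `H`. -/
def MACond (act : H →ₗ[k] A →ₗ[k] A) (m : A ⊗[k] A →ₗ[k] A) (δ : H →ₗ[k] H ⊗[k] H) : Prop :=
  TensorProduct.lift act ∘ₗ TensorProduct.map LinearMap.id m
    = m ∘ₗ TensorProduct.map (TensorProduct.lift act) (TensorProduct.lift act)
        ∘ₗ (TensorProduct.tensorTensorTensorComm k H H A A).toLinearMap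
        ∘ₗ TensorProduct.map δ LinearMap.id

/-- `A` is a left `H`-module algebra via `act`. -/
def IsModuleAlgebra (act : H →ₗ[k] A →ₗ[k] A) : Prop :=
  (∀ g h : H, ∀ a : A, act (g * h) a = act g (act h a)) ∧
  (∀ a : A, act 1 a = a) ∧
  (∀ h : H, act h (1 : A) = Coalgebra.counit (R := k) h • (1 : A)) ∧
  MACond act (LinearMap.mul' k A) (Coalgebra.comul (R := k))

/-- The multiplication of the crossed product `A ⋊ H`:
`(a ⊗ g)(b ⊗ h) = a (g⁽⁰⁾·b) ⊗ g⁽¹⁾ h`, as a linear map on the tensor square. -/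
def cpMul (act : H →ₗ[k] A →ₗ[k] A) : (A ⊗[k] H) ⊗[k] (A ⊗[k] H) →ₗ[k] A ⊗[k] H :=
  TensorProduct.map (LinearMap.mul' k A) LinearMap.id
  ∘ₗ (TensorProduct.assoc k A A H).symm.toLinearMap
  ∘ₗ TensorProduct.map LinearMap.id
       (TensorProduct.map (TensorProduct.lift act) (LinearMap.mul' k H)
         ∘ₗ (TensorProduct.tensorTensorTensorComm k H H A H).toLinearMap
         ∘ₗ TensorProduct.map Coalgebra.comul LinearMap.id)
  ∘ₗ (TensorProduct.assoc k A H (A ⊗[k] H)).toLinearMap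


set_option maxHeartbeats 1000000
set_option synthInstance.maxHeartbeats 200000

/-- `Tpow0 M n` is the `n`-fold tensor power `M^{⊗n}`, with `M^{⊗0} = k`. -/
def Tpow0 (M : ModuleCat.{0} k) : ℕ → ModuleCat.{0} k
  | 0 => ModuleCat.of k k
  | n+1 => ModuleCat.of k (↥M ⊗[k] ↥(Tpow0 M n))

variable {M : Type} [AddCommGroup M] [Module k M]

/-- The `i`-th face of the chain complex `C_•(H,M) = {H^{⊗p} ⊗ M}` computing the Hopf algebra
homology of `H` with coefficients in a left `H`-module `M`: `d_0 = ε(g_1)(g_2,…,g_p,m)`,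
`d_i(…) = (g_1,…,g_i g_{i+1},…,g_p,m)` for `1 ≤ i ≤ p-1`, and
`d_p(…) = (g_1,…,g_{p-1},g_p·m)`. -/
def face (actM : H →ₗ[k] M →ₗ[k] M) :
    ∀ (p i : ℕ), (↥(Tpow0 (ModuleCat.of k H) (p+1)) ⊗[k] M) →ₗ[k]
      (↥(Tpow0 (ModuleCat.of k H) p) ⊗[k] M)
  | p, 0 =>
    TensorProduct.map
      ((TensorProduct.lid k ↥(Tpow0 (ModuleCat.of k H) p)).toLinearMap
        ∘ₗ TensorProduct.map (Coalgebra.counit (R := k)) LinearMap.id)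
      LinearMap.id
  | 0, 1 =>
    TensorProduct.map LinearMap.id (TensorProduct.lift actM)
    ∘ₗ (TensorProduct.assoc k k H M).toLinearMap
    ∘ₗ TensorProduct.map (TensorProduct.comm k H k).toLinearMap LinearMap.id
  | 0, _+2 => 0
  | p+1, 1 =>
    TensorProduct.map
      (TensorProduct.map (LinearMap.mul' k H) LinearMap.id
        ∘ₗ (TensorProduct.assoc k H H ↥(Tpow0 (ModuleCat.of k H) p)).symm.toLinearMap)
      LinearMap.id
  | p+1, i+2 =>
    (TensorProduct.assoc k H ↥(Tpow0 (ModuleCat.of k H) p) M).symm.toLinearMap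
    ∘ₗ TensorProduct.map LinearMap.id (face actM p (i+1))
    ∘ₗ (TensorProduct.assoc k H ↥(Tpow0 (ModuleCat.of k H) (p+1)) M).toLinearMap

/-- The boundary `δ = Σ (−1)^i d_i : C_{p+1}(H,M) → C_p(H,M)` of the complex computing
Hopf algebra homology. -/
def delta (actM : H →ₗ[k] M →ₗ[k] M) (p : ℕ) :
    (↥(Tpow0 (ModuleCat.of k H) (p+1)) ⊗[k] M) →ₗ[k]
      (↥(Tpow0 (ModuleCat.of k H) p) ⊗[k] M) :=
  ∑ i ∈ Finset.range (p+2), ((-1 : ℤ)^i) • face actM p i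

/-- The homotopy operator `h(h_1 ⊗ ⋯ ⊗ h_m ⊗ m) = t ⊗ h_1 ⊗ ⋯ ⊗ h_m ⊗ m`. -/
def hmap (t : H) (m : ℕ) :
    (↥(Tpow0 (ModuleCat.of k H) m) ⊗[k] M) →ₗ[k]
      (↥(Tpow0 (ModuleCat.of k H) (m+1)) ⊗[k] M) :=
  TensorProduct.map (TensorProduct.mk k H ↥(Tpow0 (ModuleCat.of k H) m) t) LinearMap.id

lemma counit_lid (X : Type) [AddCommGroup X] [Module k X] (t : H)
    (htcounit : Coalgebra.counit (R := k) t = 1) :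
    ((TensorProduct.lid k X).toLinearMap
      ∘ₗ TensorProduct.map (Coalgebra.counit (R := k)) (LinearMap.id (M := X)))
      ∘ₗ TensorProduct.mk k H X t = LinearMap.id := by
  apply LinearMap.ext; intro x
  simp [htcounit]

lemma face0_hmap (actM : H →ₗ[k] M →ₗ[k] M) (t : H)
    (htcounit : Coalgebra.counit (R := k) t = 1) (n : ℕ) :
    (face (M := M) actM (n+1) 0) ∘ₗ hmap t (n+1) = LinearMap.id := by
  rw [face, hmap]
  refine (TensorProduct.map_comp _ _ _ _).symm.trans ?_
  exact (congrArg (fun f => TensorProduct.map f (LinearMap.id ∘ₗ LinearMap.id (M := M)))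
    (counit_lid _ t htcounit)).trans (by rw [LinearMap.id_comp, TensorProduct.map_id])

lemma keyB (X : Type) [AddCommGroup X] [Module k X] (t : H)
    (ht : ∀ h : H, t * h = Coalgebra.counit (R := k) h • t) :
    (TensorProduct.map (LinearMap.mul' k H) (LinearMap.id (M := X))
       ∘ₗ (TensorProduct.assoc k H H X).symm.toLinearMap)
      ∘ₗ TensorProduct.mk k H (H ⊗[k] X) t
    = TensorProduct.mk k H X t
      ∘ₗ ((TensorProduct.lid k X).toLinearMap
        ∘ₗ TensorProduct.map (Coalgebra.counit (R := k)) (LinearMap.id (M := X))) := by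
  apply TensorProduct.ext'
  intro h x
  simp [ht h, TensorProduct.tmul_smul, TensorProduct.smul_tmul']

lemma keyL1 (X Y : Type) [AddCommGroup X] [Module k X] [AddCommGroup Y] [Module k Y]
    (t : H) :
    (TensorProduct.assoc k H X Y).toLinearMap
      ∘ₗ TensorProduct.map (TensorProduct.mk k H X t) (LinearMap.id (M := Y))
    = TensorProduct.mk k H (X ⊗[k] Y) t := by
  apply TensorProduct.ext'
  intro x y
  rfl

lemma keyL2 (A B : Type) [AddCommGroup A] [Module k A] [AddCommGroup B] [Module k B]
    (t : H) (g : A →ₗ[k] B) :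
    TensorProduct.map (LinearMap.id (M := H)) g ∘ₗ TensorProduct.mk k H A t
    = TensorProduct.mk k H B t ∘ₗ g := by
  apply LinearMap.ext; intro a
  simp

lemma keyL3 (X Y : Type) [AddCommGroup X] [Module k X] [AddCommGroup Y] [Module k Y]
    (t : H) :
    (TensorProduct.assoc k H X Y).symm.toLinearMap
      ∘ₗ TensorProduct.mk k H (X ⊗[k] Y) t
    = TensorProduct.map (TensorProduct.mk k H X t) (LinearMap.id (M := Y)) := by
  apply TensorProduct.ext'
  intro x y
  rfl

lemma face_succ_hmap (actM : H →ₗ[k] M →ₗ[k] M) (t : H)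
    (ht : ∀ h : H, t * h = Coalgebra.counit (R := k) h • t) (n i : ℕ) :
    face (M := M) actM (n+1) (i+1) ∘ₗ hmap t (n+1) = hmap t n ∘ₗ face actM n i := by
  cases i with
  | zero =>
    rw [show face (M := M) actM (n+1) 1
        = TensorProduct.map
            (TensorProduct.map (LinearMap.mul' k H) LinearMap.id
              ∘ₗ (TensorProduct.assoc k H H
                    ↥(Tpow0 (ModuleCat.of k H) n)).symm.toLinearMap)
            LinearMap.id from rfl,
      face, hmap, hmap]
    exact (TensorProduct.map_comp _ _ _ _).symm.trans ((congrArg (fun f => TensorProduct.map f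
      (LinearMap.id ∘ₗ LinearMap.id (M := M)))
      (keyB (↥(Tpow0 (ModuleCat.of k H) n)) t ht)).trans (TensorProduct.map_comp _ _ _ _))
  | succ j =>
    rw [show face (M := M) actM (n+1) (j+2)
        = (TensorProduct.assoc k H ↥(Tpow0 (ModuleCat.of k H) n) M).symm.toLinearMap
          ∘ₗ TensorProduct.map LinearMap.id (face actM n (j+1))
          ∘ₗ (TensorProduct.assoc k H
               ↥(Tpow0 (ModuleCat.of k H) (n+1)) M).toLinearMap from rfl,
      hmap, hmap]
    exact (LinearMap.comp_assoc _ _ _).trans ((congrArg (fun f =>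
        (TensorProduct.assoc k H ↥(Tpow0 (ModuleCat.of k H) n) M).symm.toLinearMap ∘ₗ f)
        ((LinearMap.comp_assoc _ _ _).trans ((congrArg (fun f =>
          TensorProduct.map (LinearMap.id (M := H)) (face actM n (j+1)) ∘ₗ f)
          (keyL1 _ _ t)).trans (keyL2 _ _ t _)))).trans
        ((LinearMap.comp_assoc _ _ _).symm.trans
          (congrArg (fun f => f ∘ₗ face actM n (j+1)) (keyL3 _ _ t))))

/-- If `H` is a Hopf algebra over a field possessing a right integral `t`
with `ε(t) = 1`, then `δh + hδ = id` on `C_n(H,M)` for every `n ≥ 1` and every left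
`H`-module `M`; in particular the Hopf algebra homology of `H` with coefficients in `M`
vanishes in positive degrees. -/
theorem homotopy_formula (actM : H →ₗ[k] M →ₗ[k] M)
    (hactmul : ∀ (g h : H) (m : M), actM (g * h) m = actM g (actM h m))
    (hactone : ∀ m : M, actM 1 m = m)
    (t : H) (ht : ∀ h : H, t * h = Coalgebra.counit (R := k) h • t)
    (htcounit : Coalgebra.counit (R := k) t = 1)
    (n : ℕ) (x : ↥(Tpow0 (ModuleCat.of k H) (n+1)) ⊗[k] M) :
    delta actM (n+1) (hmap t (n+1) x) + hmap t n (delta actM n x) = x := by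
  have h0 : face actM (n+1) 0 (hmap t (n+1) x) = x :=
    LinearMap.congr_fun (face0_hmap actM t htcounit n) x
  have hs : ∀ i, face actM (n+1) (i+1) (hmap t (n+1) x)
      = hmap t n (face actM n i x) :=
    fun i => LinearMap.congr_fun (face_succ_hmap actM t ht n i) x
  rw [delta, delta]
  simp only [LinearMap.sum_apply, LinearMap.smul_apply]
  rw [Finset.sum_range_succ' _ (n+2)]
  simp only [hs, h0, pow_zero, one_smul, pow_succ, mul_neg_one, neg_smul,
    map_sum, map_zsmul, Finset.sum_neg_distrib]
  abel
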